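/- Let A be a Hopf algebra, K a central Hopf subalgebra, K⁺ = K ∩ ker ε, and ρ a convolution-invertible unital 2-cocycle on A satisfying ρ(a, x) = ε(a)ε(x) = ρ(x, a) for all a ∈ A and x ∈ K⁺·A + A·K⁺ (i.e. ρ vanishes on the kernel of A⊗A → (A/AK⁺) ⊗ (A/AK⁺)). Then ρ factors through a unital 2-cocycle ρ' on the quotient Hopf algebra A/AK⁺, and (A/AK⁺)_{ρ'} ≅ A_ρ/AK⁺ as Hopf algebras. -/

import Mathlib

/- STATEMENT 13: Let `A` be a Hopf algebra, `K` a central Hopf subalgebra,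
`K⁺ = K ∩ ker ε`, and `ρ` a convolution-invertible unital 2-cocycle on `A` vanishing
(in the sense `ρ(a,x) = ε(a)ε(x) = ρ(x,a)`) on `A ⊗ AK⁺ + AK⁺ ⊗ A`, i.e. on the
kernel of `A ⊗ A → (A/AK⁺) ⊗ (A/AK⁺)`.  Then `ρ` factors through a unital 2-cocycle
`ρ'` on the quotient Hopf algebra `A/AK⁺`, and `(A/AK⁺)_{ρ'} ≅ A_ρ/AK⁺` as Hopf
algebras.  The quotient Hopf algebra `A/AK⁺` is represented by a surjective bialgebra
map `π : A → Q` with kernel `AK⁺`; the isomorphism `(A/AK⁺)_{ρ'} ≅ A_ρ/AK⁺` is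
expressed by saying that `π` intertwines the `ρ`-deformed multiplication of `A` with
the `ρ'`-deformed multiplication of `Q` (the coalgebra structures being untouched by
deformation). -/

open TensorProduct

universe u

variable {k : Type u} [Field k]

/-- Convolution product of two functionals on a coalgebra. -/
noncomputable def conv {C : Type u} [AddCommGroup C] [Module k C] [Coalgebra k C]
    (f g : C →ₗ[k] k) : C →ₗ[k] k :=
  LinearMap.mul' k k ∘ₗ TensorProduct.map f g ∘ₗ Coalgebra.comul

/-- `x ↦ φ(x₁) • μ(x₂)`. -/
noncomputable def convL {C A : Type u} [AddCommGroup C] [Module k C] [Coalgebra k C]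
    [Ring A] [Algebra k A] (φ : C →ₗ[k] k) (μ : C →ₗ[k] A) : C →ₗ[k] A :=
  (TensorProduct.lid k A).toLinearMap ∘ₗ TensorProduct.map φ μ ∘ₗ Coalgebra.comul

/-- `x ↦ φ(x₂) • μ(x₁)`. -/
noncomputable def convR {C A : Type u} [AddCommGroup C] [Module k C] [Coalgebra k C]
    [Ring A] [Algebra k A] (μ : C →ₗ[k] A) (φ : C →ₗ[k] k) : C →ₗ[k] A :=
  (TensorProduct.rid k A).toLinearMap ∘ₗ TensorProduct.map μ φ ∘ₗ Coalgebra.comul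

/-- The deformed multiplication `x ⊗ y ↦ σ(x₁,y₁) x₂y₂ σ'(x₃,y₃)`. -/
noncomputable def deform {A : Type u} [Ring A] [Bialgebra k A]
    (σ : A ⊗[k] A →ₗ[k] k) (μ : A ⊗[k] A →ₗ[k] A) (σ' : A ⊗[k] A →ₗ[k] k) :
    A ⊗[k] A →ₗ[k] A :=
  convR (convL σ μ) σ'

/-- The 2-cocycle condition `σ(x₁,y₁)σ(x₂y₂,z) = σ(y₁,z₁)σ(x,y₂z₂)` on a bialgebra. -/
noncomputable def IsCocycle {A : Type u} [Ring A] [Bialgebra k A]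
    (σ : A ⊗[k] A →ₗ[k] k) : Prop :=
  conv (LinearMap.mul' k k ∘ₗ TensorProduct.map σ Coalgebra.counit)
      (σ ∘ₗ TensorProduct.map (LinearMap.mul' k A) LinearMap.id) =
    conv ((LinearMap.mul' k k ∘ₗ TensorProduct.map Coalgebra.counit σ) ∘ₗ
        (TensorProduct.assoc k A A A).toLinearMap)
      (σ ∘ₗ TensorProduct.map LinearMap.id (LinearMap.mul' k A) ∘ₗ
        (TensorProduct.assoc k A A A).toLinearMap)

/-
Both `ρ` and `ρ⁻¹` restrict to `ε ⊗ ε` on `A ⊗ K` and `K ⊗ A`: for `ρ` this follows from the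
vanishing hypothesis and unitality, and for `ρ⁻¹` because `K` is a subcoalgebra, so that
`(ρ⁻¹ * ρ)(a ⊗ v)` collapses to `ρ⁻¹(a ⊗ v)` for `v ∈ K`. Evaluating the identity
`ρ⁻¹(x₁y₁, z) ρ⁻¹(x₂, y₂) = ρ⁻¹(x, y₁z₁) ρ⁻¹(y₂, z₂)` obeyed by the inverse of a cocycle at
`(c ⊗ a) ⊗ y` and at `(a ⊗ y) ⊗ c` with `y ∈ K`, and using that `y` is central, gives
`ρ⁻¹(c, ay) = ε(y) ρ⁻¹(c, a)` and `ρ⁻¹(ay, c) = ε(y) ρ⁻¹(a, c)`. Hence `ρ⁻¹`, like `ρ`, vanishes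
on `A ⊗ AK⁺ + AK⁺ ⊗ A = ker (π ⊗ π)`, and both factor through `π ⊗ π`. Precomposition with the
surjective coalgebra maps `π ⊗ π` and `(π ⊗ π) ⊗ π` is an injective homomorphism of
convolution algebras, so the factored maps are mutually inverse, form a unital cocycle, and
intertwine the deformed multiplications.
-/

open WithConv
open scoped Coalgebra

section Factorization

lemma apply_eq_zero_of_mem_ideal_span {A M : Type*} [Ring A] [Algebra k A] [AddCommGroup M]
    [Module k M] (f : A →ₗ[k] M) {S : Set A} (hf : ∀ a, ∀ y ∈ S, f (a * y) = 0) {x : A}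
    (hx : x ∈ Ideal.span S) : f x = 0 := by
  suffices ∀ a, f (a * x) = 0 by simpa using this 1
  induction hx using Submodule.span_induction with
  | mem y hy => exact fun a => hf a y hy
  | zero => simp
  | add x y _ _ hx hy => intro a; rw [mul_add, map_add, hx, hy, add_zero]
  | smul b x _ hx => intro a; rw [smul_eq_mul, ← mul_assoc]; exact hx _

lemma exists_comp_map_eq {V W M : Type*} [AddCommGroup V] [Module k V] [AddCommGroup W]
    [Module k W] [AddCommGroup M] [Module k M] {f : V →ₗ[k] W} (hf : Function.Surjective f)
    (L : V ⊗[k] V →ₗ[k] M) (hl : ∀ c, ∀ x ∈ LinearMap.ker f, L (c ⊗ₜ x) = 0)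
    (hr : ∀ c, ∀ x ∈ LinearMap.ker f, L (x ⊗ₜ c) = 0) :
    ∃ L' : W ⊗[k] W →ₗ[k] M, L' ∘ₗ TensorProduct.map f f = L := by
  have hker : LinearMap.ker (TensorProduct.map f f) ≤ LinearMap.ker L := by
    rw [TensorProduct.map_ker (LinearMap.exact_subtype_ker_map f) hf
      (LinearMap.exact_subtype_ker_map f) hf, sup_le_iff,
      LinearMap.range_le_ker_iff, LinearMap.range_le_ker_iff]
    exact ⟨TensorProduct.ext' fun c x => hl c x x.2, TensorProduct.ext' fun x c => hr c x x.2⟩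
  let e := LinearMap.quotKerEquivOfSurjective _ (TensorProduct.map_surjective hf hf)
  refine ⟨(LinearMap.ker _).liftQ L hker ∘ₗ e.symm.toLinearMap, LinearMap.ext fun z => ?_⟩
  have hz : e.symm (TensorProduct.map f f z) = Submodule.Quotient.mk z :=
    (LinearEquiv.symm_apply_eq _).2 rfl
  simp [hz]

end Factorization

section Convolution

variable {C D : Type u} [AddCommGroup C] [Module k C] [Coalgebra k C]
  [AddCommGroup D] [Module k D] [Coalgebra k D]

lemma toConv_conv (f g : C →ₗ[k] k) : toConv (conv f g) = toConv f * toConv g := rfl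

lemma toConv_counit : toConv (Coalgebra.counit : C →ₗ[k] k) = 1 := by
  ext; simp

lemma conv_eq_counit_iff {f g : C →ₗ[k] k} :
    conv f g = Coalgebra.counit ↔ toConv f * toConv g = 1 := by
  rw [← toConv_conv, ← toConv_counit, toConv_injective.eq_iff]

lemma Coalgebra.Repr.sum_smul_counit {z : C} {ι : Type*} (r : Coalgebra.Repr k z ι) :
    ∑ i ∈ r.index, Coalgebra.counit (R := k) (r.right i) • r.left i = z := by
  simpa only [map_sum, _root_.TensorProduct.rid_tmul, one_smul]
    using congrArg (_root_.TensorProduct.rid k C) (Coalgebra.sum_tmul_counit_eq r)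

lemma Coalgebra.Repr.convMul_apply_eq_left {z : C} {ι : Type*} (r : Coalgebra.Repr k z ι)
    (f g : WithConv (C →ₗ[k] k))
    (hg : ∀ i ∈ r.index, g (r.right i) = Coalgebra.counit (R := k) (r.right i)) :
    (f * g) z = f z := by
  rw [r.convMul_apply]
  conv_rhs => rw [← r.sum_smul_counit]
  simp only [map_sum, map_smul, smul_eq_mul]
  exact Finset.sum_congr rfl fun i hi => by rw [hg i hi, mul_comm]

lemma Coalgebra.Repr.convMul_apply_eq_right {z : C} {ι : Type*} (r : Coalgebra.Repr k z ι)
    (f g : WithConv (C →ₗ[k] k))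
    (hf : ∀ i ∈ r.index, f (r.left i) = Coalgebra.counit (R := k) (r.left i)) :
    (f * g) z = g z := by
  rw [r.convMul_apply]
  conv_rhs => rw [← Coalgebra.sum_counit_smul r]
  simp only [map_sum, map_smul, smul_eq_mul]
  exact Finset.sum_congr rfl fun i hi => by rw [hf i hi]

variable {E : Type*} [Ring E] [Algebra k E]

noncomputable def convComp (φ : C →ₗc[k] D) :
    WithConv (D →ₗ[k] E) →+* WithConv (C →ₗ[k] E) where
  toFun f := toConv (f.ofConv ∘ₗ φ.toLinearMap)
  map_one' := by ext; simp
  map_mul' f g := WithConv.ext (LinearMap.convMul_comp_coalgHom_distrib f g φ)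
  map_zero' := by ext; simp
  map_add' _ _ := by ext; simp

@[simp] lemma convComp_apply (φ : C →ₗc[k] D) (f : WithConv (D →ₗ[k] E)) (x : C) :
    convComp φ f x = f (φ x) := rfl

lemma convComp_injective {φ : C →ₗc[k] D} (hφ : Function.Surjective φ) :
    Function.Injective (convComp (E := E) φ) := fun _ _ h =>
  WithConv.ext <| (LinearMap.cancel_right hφ).1 congr(($h).ofConv)

lemma conv_eq_counit_of_comp {φ : C →ₗc[k] D} (hφ : Function.Surjective φ) {σ τ : D →ₗ[k] k}
    (h : conv (σ ∘ₗ φ.toLinearMap) (τ ∘ₗ φ.toLinearMap) = Coalgebra.counit) :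
    conv σ τ = Coalgebra.counit := by
  rw [conv_eq_counit_iff] at h ⊢
  exact convComp_injective hφ (by rwa [map_mul, map_one])

end Convolution

section Cocycle

variable (A : Type u) [Ring A] [Bialgebra k A]

/-- The face maps `ε ⊗ id ⊗ id`, `m ⊗ id`, `id ⊗ m`, `id ⊗ id ⊗ ε` of Sweedler's cochain
complex; `IsCocycle σ` says `(σ ∘ ∂₃) * (σ ∘ ∂₁) = (σ ∘ ∂₀) * (σ ∘ ∂₂)`. -/
noncomputable def face : Fin 4 → ((A ⊗[k] A) ⊗[k] A →ₗc[k] A ⊗[k] A)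
  | 0 => (Coalgebra.TensorProduct.lid k (A ⊗[k] A)).toCoalgHom.comp
      ((CoalgHom.rTensor (A ⊗[k] A) (Coalgebra.counitCoalgHom k A)).comp
        (Coalgebra.TensorProduct.assoc k k A A A).toCoalgHom)
  | 1 => CoalgHom.rTensor A (Bialgebra.mulCoalgHom k A)
  | 2 => (CoalgHom.lTensor A (Bialgebra.mulCoalgHom k A)).comp
      (Coalgebra.TensorProduct.assoc k k A A A).toCoalgHom
  | 3 => (Coalgebra.TensorProduct.rid k k (A ⊗[k] A)).toCoalgHom.comp
      (CoalgHom.lTensor (A ⊗[k] A) (Coalgebra.counitCoalgHom k A))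

variable {A}

@[simp] lemma face_zero_tmul (x y z : A) :
    face A 0 ((x ⊗ₜ[k] y) ⊗ₜ[k] z) = Coalgebra.counit (R := k) x • (y ⊗ₜ[k] z) := by
  simp [face]

@[simp] lemma face_one_tmul (x y z : A) :
    face A 1 ((x ⊗ₜ[k] y) ⊗ₜ[k] z) = (x * y) ⊗ₜ[k] z := by
  simp [face]

@[simp] lemma face_two_tmul (x y z : A) :
    face A 2 ((x ⊗ₜ[k] y) ⊗ₜ[k] z) = x ⊗ₜ[k] (y * z) := by
  simp [face]

@[simp] lemma face_three_tmul (x y z : A) :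
    face A 3 ((x ⊗ₜ[k] y) ⊗ₜ[k] z) = Coalgebra.counit (R := k) z • (x ⊗ₜ[k] y) := by
  simp [face]

lemma isCocycle_iff (σ : A ⊗[k] A →ₗ[k] k) :
    IsCocycle σ ↔
      convComp (face A 3) (toConv σ) * convComp (face A 1) (toConv σ) =
        convComp (face A 0) (toConv σ) * convComp (face A 2) (toConv σ) := by
  have h₀ : (LinearMap.mul' k k ∘ₗ TensorProduct.map Coalgebra.counit σ) ∘ₗ
      (TensorProduct.assoc k A A A).toLinearMap = σ ∘ₗ (face A 0).toLinearMap := by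
    ext; simp
  have h₂ : σ ∘ₗ TensorProduct.map LinearMap.id (LinearMap.mul' k A) ∘ₗ
      (TensorProduct.assoc k A A A).toLinearMap = σ ∘ₗ (face A 2).toLinearMap := by
    ext; simp
  have h₃ : LinearMap.mul' k k ∘ₗ TensorProduct.map σ Coalgebra.counit =
      σ ∘ₗ (face A 3).toLinearMap := by
    ext; simp [mul_comm]
  rw [IsCocycle, h₀, h₂, h₃, ← toConv_injective.eq_iff]
  rfl

lemma IsCocycle.inv_identity {u : (WithConv (A ⊗[k] A →ₗ[k] k))ˣ}
    (hu : IsCocycle u.val.ofConv) :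
    convComp (face A 1) (u⁻¹).val * convComp (face A 3) (u⁻¹).val =
      convComp (face A 2) (u⁻¹).val * convComp (face A 0) (u⁻¹).val := by
  let U i := Units.map (convComp (face A i)).toMonoidHom u
  have h : U 3 * U 1 = U 0 * U 2 := Units.ext ((isCocycle_iff _).1 hu)
  simpa only [mul_inv_rev, Units.val_mul, U, Units.coe_map_inv, RingHom.toMonoidHom_eq_coe,
    MonoidHom.coe_coe] using congrArg (fun v => (v⁻¹).val) h

end Cocycle

section Unital

variable {M B : Type u} [AddCommGroup M] [Module k M] [Coalgebra k M] [Ring B] [Bialgebra k B]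

variable (B) in
noncomputable def tmulOneCoalgHom : M →ₗc[k] M ⊗[k] B :=
  (CoalgHom.lTensor M (Bialgebra.unitBialgHom k B).toCoalgHom).comp
    (Coalgebra.TensorProduct.rid k k M).symm.toCoalgHom

variable (B) in
noncomputable def oneTmulCoalgHom : M →ₗc[k] B ⊗[k] M :=
  (CoalgHom.rTensor M (Bialgebra.unitBialgHom k B).toCoalgHom).comp
    (Coalgebra.TensorProduct.lid k M).symm.toCoalgHom

@[simp] lemma tmulOneCoalgHom_apply (m : M) : tmulOneCoalgHom B m = m ⊗ₜ[k] (1 : B) := by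
  simp [tmulOneCoalgHom, Bialgebra.unitBialgHom, BialgHom.toCoalgHom_apply]

@[simp] lemma oneTmulCoalgHom_apply (m : M) : oneTmulCoalgHom B m = (1 : B) ⊗ₜ[k] m := by
  simp [oneTmulCoalgHom, Bialgebra.unitBialgHom, BialgHom.toCoalgHom_apply]

variable {A : Type u} [Ring A] [Bialgebra k A] {σ : A ⊗[k] A →ₗ[k] k}

/- Precomposing the cocycle identity with `a ↦ (a ⊗ 1) ⊗ 1` shows that `σ(- ⊗ 1)` is an
idempotent unit of the convolution algebra. -/
lemma IsCocycle.apply_tmul_one (hσ : IsCocycle σ) (h1 : σ ((1 : A) ⊗ₜ[k] (1 : A)) = 1)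
    (hu : IsUnit (toConv σ)) (x : A) : σ (x ⊗ₜ[k] 1) = Coalgebra.counit (R := k) x := by
  suffices convComp (tmulOneCoalgHom A) (toConv σ) = 1 by simpa using congr($this x)
  set f := convComp (tmulOneCoalgHom A) (toConv σ)
  let ι : A →ₗc[k] (A ⊗[k] A) ⊗[k] A := (tmulOneCoalgHom A).comp (tmulOneCoalgHom A)
  have key := congrArg (convComp ι) ((isCocycle_iff σ).1 hσ)
  have e₀ : convComp ι (convComp (face A 0) (toConv σ)) = 1 := by
    ext; simp [ι, h1]
  have e : ∀ i ∈ ({1, 2, 3} : Finset (Fin 4)), convComp ι (convComp (face A i) (toConv σ)) = f := by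
    intro i hi; fin_cases hi <;> ext <;> simp [ι, f]
  simp only [map_mul, e₀, e 1 (by decide), e 2 (by decide), e 3 (by decide), one_mul] at key
  exact (IsIdempotentElem.iff_eq_one_of_isUnit (hu.map _)).1 key

lemma IsCocycle.apply_one_tmul (hσ : IsCocycle σ) (h1 : σ ((1 : A) ⊗ₜ[k] (1 : A)) = 1)
    (hu : IsUnit (toConv σ)) (x : A) : σ (1 ⊗ₜ[k] x) = Coalgebra.counit (R := k) x := by
  suffices convComp (oneTmulCoalgHom A) (toConv σ) = 1 by simpa using congr($this x)
  set g := convComp (oneTmulCoalgHom A) (toConv σ)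
  let ι : A →ₗc[k] (A ⊗[k] A) ⊗[k] A := oneTmulCoalgHom (A ⊗[k] A)
  have key := congrArg (convComp ι) ((isCocycle_iff σ).1 hσ)
  have e₃ : convComp ι (convComp (face A 3) (toConv σ)) = 1 := by
    ext; simp [ι, Algebra.TensorProduct.one_def, h1]
  have e : ∀ i ∈ ({0, 1, 2} : Finset (Fin 4)), convComp ι (convComp (face A i) (toConv σ)) = g := by
    intro i hi; fin_cases hi <;> ext <;> simp [ι, g, Algebra.TensorProduct.one_def]
  simp only [map_mul, e₃, e 0 (by decide), e 1 (by decide), e 2 (by decide), one_mul] at key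
  exact (IsIdempotentElem.iff_eq_one_of_isUnit (hu.map _)).1 key.symm

end Unital

section CentralSubalgebra

variable {A : Type u} [Ring A] [Bialgebra k A]

def Subalgebra.IsSubcoalgebra (K : Subalgebra k A) : Prop :=
  ∀ x ∈ K, Coalgebra.comul (R := k) x ∈
    LinearMap.range (TensorProduct.map K.val.toLinearMap K.val.toLinearMap)

def IsCounitOn (K : Subalgebra k A) (σ : A ⊗[k] A →ₗ[k] k) : Prop :=
  ∀ x, ∀ v ∈ K, σ (x ⊗ₜ[k] v) = Coalgebra.counit (R := k) (x ⊗ₜ[k] v) ∧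
    σ (v ⊗ₜ[k] x) = Coalgebra.counit (R := k) (v ⊗ₜ[k] x)

variable {K : Subalgebra k A}

lemma Subalgebra.IsSubcoalgebra.exists_repr (hK : K.IsSubcoalgebra) {x : A} (hx : x ∈ K) :
    ∃ r : Coalgebra.Repr k x (K × K), ∀ p, r.left p ∈ K ∧ r.right p ∈ K := by
  obtain ⟨t, ht⟩ := hK x hx
  obtain ⟨s, rfl⟩ := TensorProduct.exists_finset (R := k) t
  exact ⟨⟨s, fun p => p.1, fun p => p.2, by simpa using ht⟩, fun p => ⟨p.1.2, p.2.2⟩⟩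

lemma isCounitOn_of_counitKer {σ : A ⊗[k] A →ₗ[k] k}
    (hl : ∀ x, σ (x ⊗ₜ[k] 1) = Coalgebra.counit (R := k) x)
    (hr : ∀ x, σ (1 ⊗ₜ[k] x) = Coalgebra.counit (R := k) x)
    (h : ∀ x, ∀ y ∈ K, Coalgebra.counit (R := k) y = 0 →
      σ (x ⊗ₜ[k] y) = Coalgebra.counit (R := k) (x ⊗ₜ[k] y) ∧
        σ (y ⊗ₜ[k] x) = Coalgebra.counit (R := k) (y ⊗ₜ[k] x)) :
    IsCounitOn K σ := by
  intro x v hv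
  set y := v - Coalgebra.counit (R := k) v • (1 : A)
  obtain ⟨h₁, h₂⟩ := h x y (sub_mem hv (K.smul_mem K.one_mem _)) (by simp [y])
  rw [show v = y + Coalgebra.counit (R := k) v • (1 : A) by simp [y]]
  simp [TensorProduct.tmul_add, TensorProduct.add_tmul, ← TensorProduct.smul_tmul', h₁, h₂,
    hl, hr, mul_comm]

lemma IsCounitOn.inv (hK : K.IsSubcoalgebra) {u : (WithConv (A ⊗[k] A →ₗ[k] k))ˣ}
    (hu : IsCounitOn K u.val.ofConv) : IsCounitOn K (u⁻¹).val.ofConv := by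
  intro x v hv
  obtain ⟨r, hr⟩ := hK.exists_repr hv
  constructor
  · have h := congrArg (fun f : WithConv (A ⊗[k] A →ₗ[k] k) => f (x ⊗ₜ[k] v)) u.inv_mul
    simp only [LinearMap.convOne_apply, Algebra.algebraMap_self, RingHom.id_apply] at h
    rwa [((ℛ k x).tmul r).convMul_apply_eq_left _ _ fun p _ => (hu _ _ (hr p.2).2).1] at h
  · have h := congrArg (fun f : WithConv (A ⊗[k] A →ₗ[k] k) => f (v ⊗ₜ[k] x)) u.mul_inv
    simp only [LinearMap.convOne_apply, Algebra.algebraMap_self, RingHom.id_apply] at h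
    rwa [(r.tmul (ℛ k x)).convMul_apply_eq_right _ _ fun p _ => (hu _ _ (hr p.1).1).2] at h

variable {w : WithConv (A ⊗[k] A →ₗ[k] k)}

/- Evaluate the identity at `(c ⊗ a) ⊗ y`: on the legs, whose last factor lies in `K`,
both `w ∘ ∂₁` and `w ∘ ∂₀` agree with the counit. -/
lemma apply_tmul_mul_of_mem (hK : K.IsSubcoalgebra) (hwK : IsCounitOn K w.ofConv)
    (hw : convComp (face A 1) w * convComp (face A 3) w =
      convComp (face A 2) w * convComp (face A 0) w)
    (c a : A) {y : A} (hy : y ∈ K) :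
    w (c ⊗ₜ[k] (a * y)) = Coalgebra.counit (R := k) y * w (c ⊗ₜ[k] a) := by
  obtain ⟨r, hr⟩ := hK.exists_repr hy
  have h := congrArg (fun f : WithConv ((A ⊗[k] A) ⊗[k] A →ₗ[k] k) => f ((c ⊗ₜ[k] a) ⊗ₜ[k] y)) hw
  rw [(((ℛ k c).tmul (ℛ k a)).tmul r).convMul_apply_eq_right _ _ fun p _ => ?_,
    (((ℛ k c).tmul (ℛ k a)).tmul r).convMul_apply_eq_left _ _ fun p _ => ?_] at h
  · simpa using h.symm
  · simp [(hwK _ _ (hr p.2).2).1, mul_comm, mul_left_comm]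
  · simp [(hwK _ _ (hr p.2).1).1, Bialgebra.counit_mul, mul_comm]

lemma apply_mul_tmul_of_mem (hK : K.IsSubcoalgebra) (hcentral : ∀ x ∈ K, ∀ a : A, x * a = a * x)
    (hwK : IsCounitOn K w.ofConv)
    (hw : convComp (face A 1) w * convComp (face A 3) w =
      convComp (face A 2) w * convComp (face A 0) w)
    (a c : A) {y : A} (hy : y ∈ K) :
    w ((a * y) ⊗ₜ[k] c) = Coalgebra.counit (R := k) y * w (a ⊗ₜ[k] c) := by
  obtain ⟨r, hr⟩ := hK.exists_repr hy
  have h := congrArg (fun f : WithConv ((A ⊗[k] A) ⊗[k] A →ₗ[k] k) => f ((a ⊗ₜ[k] y) ⊗ₜ[k] c)) hw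
  rw [(((ℛ k a).tmul r).tmul (ℛ k c)).convMul_apply_eq_left _ _ fun p _ => ?_,
    (((ℛ k a).tmul r).tmul (ℛ k c)).convMul_apply_eq_left _ _ fun p _ => ?_] at h
  · simp only [convComp_apply, face_one_tmul, face_two_tmul] at h
    rw [h, hcentral y hy c, apply_tmul_mul_of_mem hK hwK hw a c hy]
  · simp [(hwK _ _ (hr p.1.2).2).2, mul_comm, mul_left_comm]
  · simp [(hwK _ _ (hr p.1.2).2).1, mul_comm, mul_left_comm]

lemma inv_apply_eq_zero_of_mem_span (hK : K.IsSubcoalgebra)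
    (hcentral : ∀ x ∈ K, ∀ a : A, x * a = a * x) {u : (WithConv (A ⊗[k] A →ₗ[k] k))ˣ}
    (hu : IsCocycle u.val.ofConv) (huK : IsCounitOn K u.val.ofConv) (c : A) {x : A}
    (hx : x ∈ Ideal.span {y : A | y ∈ K ∧ Coalgebra.counit (R := k) y = 0}) :
    (u⁻¹).val (c ⊗ₜ[k] x) = 0 ∧ (u⁻¹).val (x ⊗ₜ[k] c) = 0 := by
  have hvK := huK.inv hK
  have hv := hu.inv_identity
  exact ⟨apply_eq_zero_of_mem_ideal_span ((u⁻¹).val.ofConv ∘ₗ TensorProduct.mk k A A c)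
      (fun a y hy => by simp [apply_tmul_mul_of_mem hK hvK hv c a hy.1, hy.2]) hx,
    apply_eq_zero_of_mem_ideal_span ((u⁻¹).val.ofConv ∘ₗ (TensorProduct.mk k A A).flip c)
      (fun a y hy => by simp [apply_mul_tmul_of_mem hK hcentral hvK hv a c hy.1, hy.2]) hx⟩

end CentralSubalgebra

section Descent

variable {A B : Type u} [Ring A] [Bialgebra k A] [Ring B] [Bialgebra k B]

lemma toConv_deform (σ τ : A ⊗[k] A →ₗ[k] k) (μ : A ⊗[k] A →ₗ[k] A) :
    toConv (deform σ μ τ) =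
      toConv (Algebra.linearMap k A ∘ₗ σ) * toConv μ * toConv (Algebra.linearMap k A ∘ₗ τ) := by
  have hL : (TensorProduct.lid k A).toLinearMap ∘ₗ TensorProduct.map σ μ =
      LinearMap.mul' k A ∘ₗ TensorProduct.map (Algebra.linearMap k A ∘ₗ σ) μ := by
    ext; simp [Algebra.smul_def]
  have hR : (TensorProduct.rid k A).toLinearMap ∘ₗ TensorProduct.map (convL σ μ) τ =
      LinearMap.mul' k A ∘ₗ TensorProduct.map (convL σ μ) (Algebra.linearMap k A ∘ₗ τ) := by
    ext; simp [Algebra.smul_def, Algebra.commutes]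
  rw [deform, convR, ← LinearMap.comp_assoc, hR, convL, ← LinearMap.comp_assoc, hL]
  rfl

lemma face_comp_map (π : A →ₐc[k] B) (i : Fin 4) :
    (face B i).toLinearMap ∘ₗ
        TensorProduct.map (TensorProduct.map π.toLinearMap π.toLinearMap) π.toLinearMap =
      TensorProduct.map π.toLinearMap π.toLinearMap ∘ₗ (face A i).toLinearMap := by
  refine TensorProduct.ext_threefold fun x y z => ?_
  fin_cases i <;> simp [BialgHom.toCoalgHom_apply]

lemma IsCocycle.of_comp (π : A →ₐc[k] B) (hπ : Function.Surjective π) {σ : B ⊗[k] B →ₗ[k] k}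
    (h : IsCocycle (σ ∘ₗ TensorProduct.map π.toLinearMap π.toLinearMap)) : IsCocycle σ := by
  let P := Coalgebra.TensorProduct.map (Coalgebra.TensorProduct.map π.toCoalgHom π.toCoalgHom)
    π.toCoalgHom
  have hP : Function.Surjective P :=
    TensorProduct.map_surjective (TensorProduct.map_surjective hπ hπ) hπ
  have nat : ∀ i, convComp P (convComp (face B i) (toConv σ)) =
      convComp (face A i) (toConv (σ ∘ₗ TensorProduct.map π.toLinearMap π.toLinearMap)) :=
    fun i => congrArg (toConv ∘ (σ ∘ₗ ·)) (face_comp_map π i)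
  rw [isCocycle_iff] at h ⊢
  apply convComp_injective hP
  simpa only [map_mul, nat] using h

lemma comp_deform_comp (π : A →ₐc[k] B) (σ τ : B ⊗[k] B →ₗ[k] k) :
    π.toLinearMap ∘ₗ deform (σ ∘ₗ TensorProduct.map π.toLinearMap π.toLinearMap)
        (LinearMap.mul' k A) (τ ∘ₗ TensorProduct.map π.toLinearMap π.toLinearMap) =
      deform σ (LinearMap.mul' k B) τ ∘ₗ TensorProduct.map π.toLinearMap π.toLinearMap := by
  let q := Coalgebra.TensorProduct.map π.toCoalgHom π.toCoalgHom
  have hmul : π.toLinearMap ∘ₗ LinearMap.mul' k A = LinearMap.mul' k B ∘ₗ q.toLinearMap :=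
    TensorProduct.ext' fun x y => by simp [q, BialgHom.toCoalgHom_apply]
  apply toConv_injective
  calc toConv (π.toLinearMap ∘ₗ deform _ (LinearMap.mul' k A) _)
      = convComp q (toConv (Algebra.linearMap k B ∘ₗ σ)) *
          toConv (π.toLinearMap ∘ₗ LinearMap.mul' k A) *
          convComp q (toConv (Algebra.linearMap k B ∘ₗ τ)) := by
        rw [show deform _ _ _ = _ from congrArg WithConv.ofConv (toConv_deform _ _ _)]
        change toConv ((AlgHomClass.toAlgHom π).toLinearMap ∘ₗ _) = _
        rw [LinearMap.algHom_comp_convMul_distrib, toConv_ofConv,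
          LinearMap.algHom_comp_convMul_distrib, toConv_ofConv]
        refine congrArg₂ (· * ·) (congrArg₂ (· * ·) ?_ rfl) ?_ <;>
          ext <;> simp [q, AlgHomClass.commutes, BialgHom.toCoalgHom_apply]
    _ = convComp q (toConv (deform σ (LinearMap.mul' k B) τ)) := by
        rw [hmul, toConv_deform, map_mul, map_mul]; rfl

end Descent

theorem cocycle_descends_to_quotient {A Q : Type u} [Ring A] [Ring Q]
    [HopfAlgebra k A] [HopfAlgebra k Q]
    -- `K` is a central Hopf subalgebra of `A`
    (K : Subalgebra k A)
    (hcentral : ∀ x ∈ K, ∀ a : A, x * a = a * x)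
    (hsub : ∀ x ∈ K, Coalgebra.comul (R := k) x ∈
      LinearMap.range (TensorProduct.map (Subalgebra.val K).toLinearMap (Subalgebra.val K).toLinearMap))
    -- `π : A → Q` is a surjective bialgebra map realising the quotient `A/AK⁺`
    (π : A →ₐ[k] Q) (hsurj : Function.Surjective π)
    (hπcomul : Coalgebra.comul (R := k) ∘ₗ π.toLinearMap =
      TensorProduct.map π.toLinearMap π.toLinearMap ∘ₗ Coalgebra.comul (R := k))
    (hπcounit : Coalgebra.counit (R := k) ∘ₗ π.toLinearMap = Coalgebra.counit (R := k))
    (hker : RingHom.ker π.toRingHom =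
      Ideal.span {y : A | y ∈ K ∧ Coalgebra.counit (R := k) y = 0})
    -- `ρ` is a convolution-invertible unital 2-cocycle on `A`
    (ρ ρinv : A ⊗[k] A →ₗ[k] k)
    (hρinv : conv ρ ρinv = Coalgebra.counit ∧ conv ρinv ρ = Coalgebra.counit)
    (hρ1 : ρ ((1 : A) ⊗ₜ[k] (1 : A)) = 1)
    (hρ : IsCocycle ρ)
    -- `ρ` vanishes (in the convolution-trivial sense) on `A·K⁺·A`
    (hvan : ∀ a x : A,
      x ∈ Ideal.span {y : A | y ∈ K ∧ Coalgebra.counit (R := k) y = 0} →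
      ρ (a ⊗ₜ[k] x) = Coalgebra.counit (R := k) a * Coalgebra.counit (R := k) x ∧
      ρ (x ⊗ₜ[k] a) = Coalgebra.counit (R := k) x * Coalgebra.counit (R := k) a) :
    -- `ρ` factors as `ρ' ∘ (π ⊗ π)` with `ρ'` a convolution-invertible unital
    -- 2-cocycle on `Q`, and `π : A_ρ → Q_{ρ'}` is a morphism for the deformed
    -- multiplications, realising `(A/AK⁺)_{ρ'} ≅ A_ρ/AK⁺`
    ∃ ρ' ρ'inv : Q ⊗[k] Q →ₗ[k] k,
      ρ' ∘ₗ TensorProduct.map π.toLinearMap π.toLinearMap = ρ ∧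
      conv ρ' ρ'inv = Coalgebra.counit ∧ conv ρ'inv ρ' = Coalgebra.counit ∧
      IsCocycle ρ' ∧ ρ' ((1 : Q) ⊗ₜ[k] (1 : Q)) = 1 ∧
      π.toLinearMap ∘ₗ deform ρ (LinearMap.mul' k A) ρinv =
        deform ρ' (LinearMap.mul' k Q) ρ'inv ∘ₗ
          TensorProduct.map π.toLinearMap π.toLinearMap := by
  set I := Ideal.span {y : A | y ∈ K ∧ Coalgebra.counit (R := k) y = 0}
  let u : (WithConv (A ⊗[k] A →ₗ[k] k))ˣ :=
    ⟨toConv ρ, toConv ρinv, conv_eq_counit_iff.1 hρinv.1, conv_eq_counit_iff.1 hρinv.2⟩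
  have hεI : ∀ x ∈ I, Coalgebra.counit (R := k) x = 0 := fun x hx =>
    apply_eq_zero_of_mem_ideal_span (Coalgebra.counit : A →ₗ[k] k)
      (fun a y hy => by simp [Bialgebra.counit_mul, hy.2]) hx
  have hρK : IsCounitOn K ρ := isCounitOn_of_counitKer
    (hρ.apply_tmul_one hρ1 u.isUnit) (hρ.apply_one_tmul hρ1 u.isUnit)
    (fun x y hyK hy0 => by simpa [mul_comm] using hvan x y (Ideal.subset_span ⟨hyK, hy0⟩))
  have hρinvI (c : A) {x : A} (hx : x ∈ I) := inv_apply_eq_zero_of_mem_span (u := u) hsub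
    hcentral hρ hρK c hx
  have hkerπ : ∀ x ∈ LinearMap.ker π.toLinearMap, x ∈ I := fun x hx =>
    hker ▸ RingHom.mem_ker.2 (LinearMap.mem_ker.1 hx)
  obtain ⟨ρ', hρ'⟩ := exists_comp_map_eq hsurj ρ
    (fun c x hx => by rw [(hvan c x (hkerπ x hx)).1, hεI x (hkerπ x hx), mul_zero])
    (fun c x hx => by rw [(hvan c x (hkerπ x hx)).2, hεI x (hkerπ x hx), zero_mul])
  obtain ⟨ρ'inv, hρ'inv⟩ := exists_comp_map_eq hsurj ρinv
    (fun c x hx => (hρinvI c (hkerπ x hx)).1) (fun c x hx => (hρinvI c (hkerπ x hx)).2)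
  let πc : A →ₐc[k] Q :=
    { π with map_smul' := map_smul π, counit_comp := hπcounit, map_comp_comul := hπcomul.symm }
  have hq : Function.Surjective (Coalgebra.TensorProduct.map πc.toCoalgHom πc.toCoalgHom) :=
    TensorProduct.map_surjective hsurj hsurj
  refine ⟨ρ', ρ'inv, hρ', ?_, ?_, IsCocycle.of_comp πc hsurj (hρ' ▸ hρ), ?_, ?_⟩
  · exact conv_eq_counit_of_comp hq (hρ' ▸ hρ'inv ▸ hρinv.1)
  · exact conv_eq_counit_of_comp hq (hρ' ▸ hρ'inv ▸ hρinv.2)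
  · simpa using congr($hρ' (1 ⊗ₜ[k] 1)).trans hρ1
  · rw [← hρ', ← hρ'inv]
    exact comp_deform_comp πc ρ' ρ'inv
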